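/- Let Γ be a connected graph and g : Γ → Γ a combinatorial immersion which induces an isomorphism on fundamental groups (with respect to some basepoint). Then g is injective on vertices. Consequently, a surjective immersion of graphs that is a homotopy equivalence is a graph isomorphism. -/

import Mathlib

/-- A (Serre) graph: a vertex set, a set of darts (oriented edges), a
fixed-point-free involution reversing darts, and an initial-vertex map. -/
structure SerreGraph where
  V : Type
  E : Type
  bar : E → E
  bar_bar : ∀ e, bar (bar e) = e
  bar_ne : ∀ e, bar e ≠ e
  src : E → V

/-- Terminal vertex of a dart. -/
def SerreGraph.tgt (G : SerreGraph) (e : G.E) : G.V := G.src (G.bar e)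

/-- Local finiteness of a graph. -/
def SerreGraph.LocFin (G : SerreGraph) : Prop := ∀ v : G.V, {e : G.E | G.src e = v}.Finite

/-- A combinatorial graph morphism (darts to darts). -/
structure GraphHom (G H : SerreGraph) where
  onV : G.V → H.V
  onE : G.E → H.E
  map_bar : ∀ e, onE (G.bar e) = H.bar (onE e)
  map_src : ∀ e, onV (G.src e) = H.src (onE e)

theorem GraphHom.map_tgt {G H : SerreGraph} (f : GraphHom G H) (e : G.E) :
    f.onV (G.tgt e) = H.tgt (f.onE e) := by
  unfold SerreGraph.tgt; rw [f.map_src, f.map_bar]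

/-- Composition of graph morphisms. -/
def GraphHom.comp {G H K : SerreGraph} (g : GraphHom H K) (f : GraphHom G H) :
    GraphHom G K where
  onV := g.onV ∘ f.onV
  onE := g.onE ∘ f.onE
  map_bar e := by simp [Function.comp, f.map_bar, g.map_bar]
  map_src e := by simp [Function.comp, f.map_src, g.map_src]

/-- Identity graph morphism. -/
def GraphHom.id (G : SerreGraph) : GraphHom G G :=
  ⟨fun v => v, fun e => e, fun _ => rfl, fun _ => rfl⟩

/-- Edge walks in a graph, with explicit endpoint bookkeeping. -/
inductive EWalk (G : SerreGraph) : G.V → G.V → Type where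
  | nil (v : G.V) : EWalk G v v
  | cons {u v w : G.V} (e : G.E) (hs : G.src e = u) (ht : G.tgt e = v)
      (p : EWalk G v w) : EWalk G u w

/-- A graph is connected if any two vertices are joined by an edge walk. -/
def SerreGraph.Conn (G : SerreGraph) : Prop := ∀ u v : G.V, Nonempty (EWalk G u v)

/-- Homotopy (rel endpoints) of edge walks: the equivalence relation generated
by cancelling backtracks `e · ē`. -/
inductive Htp (G : SerreGraph) : ∀ {u v : G.V}, EWalk G u v → EWalk G u v → Prop where
  | refl {u v} (p : EWalk G u v) : Htp G p p
  | symm {u v} {p q : EWalk G u v} : Htp G p q → Htp G q p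
  | trans {u v} {p q r : EWalk G u v} : Htp G p q → Htp G q r → Htp G p r
  | cons {u v w} (e : G.E) (hs : G.src e = u) (ht : G.tgt e = v)
      {p q : EWalk G v w} : Htp G p q →
      Htp G (EWalk.cons e hs ht p) (EWalk.cons e hs ht q)
  | cancel {u v w} (e : G.E) (hs : G.src e = u) (ht : G.tgt e = v)
      (hs' : G.src (G.bar e) = v) (ht' : G.tgt (G.bar e) = u)
      (p : EWalk G u w) :
      Htp G (EWalk.cons e hs ht (EWalk.cons (G.bar e) hs' ht' p)) p

/-- The image of an edge walk under a graph morphism. -/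
def GraphHom.mapWalk {G H : SerreGraph} (f : GraphHom G H) :
    ∀ {u v : G.V}, EWalk G u v → EWalk H (f.onV u) (f.onV v)
  | _, _, .nil v => .nil (f.onV v)
  | _, _, .cons e hs ht p =>
      .cons (f.onE e) (by rw [← f.map_src, hs]) (by rw [← f.map_tgt, ht])
        (f.mapWalk p)

/-- `f` induces a bijection on fundamental groups at `v₀` (surjectivity and
injectivity on homotopy classes of loops); for connected graphs this is
equivalent to `f` being a homotopy equivalence. -/
def InducesPi1Bij {G H : SerreGraph} (f : GraphHom G H) (v₀ : G.V) : Prop :=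
  (∀ q : EWalk H (f.onV v₀) (f.onV v₀),
      ∃ p : EWalk G v₀ v₀, Htp H (f.mapWalk p) q) ∧
  (∀ p p' : EWalk G v₀ v₀, Htp H (f.mapWalk p) (f.mapWalk p') → Htp G p p')

/-- Immersions: locally injective combinatorial graph maps. -/
def IsImmersion {G H : SerreGraph} (f : GraphHom G H) : Prop :=
  ∀ a b : G.E, G.src a = G.src b → f.onE a = f.onE b → a = b

/-- Isomorphisms of graphs. -/
def IsGraphIso {G H : SerreGraph} (f : GraphHom G H) : Prop :=
  Function.Bijective f.onV ∧ Function.Bijective f.onE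

/-- `f` is the Stallings fold identifying the (closures of the) distinct darts
`e₁, e₂` with common initial vertex: it is surjective, identifies exactly the
orbits of `{e₁, e₂}` on darts and `{tgt e₁, tgt e₂}` on vertices, and nothing
else. -/
def IsFoldAt {G H : SerreGraph} (f : GraphHom G H) (e₁ e₂ : G.E) : Prop :=
  e₁ ≠ e₂ ∧ e₂ ≠ G.bar e₁ ∧ G.src e₁ = G.src e₂ ∧
  Function.Surjective f.onV ∧ Function.Surjective f.onE ∧
  f.onE e₁ = f.onE e₂ ∧
  (∀ a b : G.E, f.onE a = f.onE b →
    a = b ∨ ({a, b} : Set G.E) = {e₁, e₂} ∨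
      ({a, b} : Set G.E) = {G.bar e₁, G.bar e₂}) ∧
  (∀ u v : G.V, f.onV u = f.onV v →
    u = v ∨ ({u, v} : Set G.V) = {G.tgt e₁, G.tgt e₂})

/-- A Stallings fold. -/
def IsFold {G H : SerreGraph} (f : GraphHom G H) : Prop := ∃ e₁ e₂, IsFoldAt f e₁ e₂

/-- A type-1 Stallings fold: the folded edges have distinct terminal vertices. -/
def IsFold1 {G H : SerreGraph} (f : GraphHom G H) : Prop :=
  ∃ e₁ e₂, IsFoldAt f e₁ e₂ ∧ G.tgt e₁ ≠ G.tgt e₂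

/-- The composite `fs (n-1) ∘ ⋯ ∘ fs 0` of a chain of graph morphisms. -/
def chainComp (Gs : ℕ → SerreGraph) (fs : ∀ i : ℕ, GraphHom (Gs i) (Gs (i + 1))) :
    ∀ n : ℕ, GraphHom (Gs 0) (Gs n)
  | 0 => GraphHom.id (Gs 0)
  | n + 1 => (fs n).comp (chainComp Gs fs n)

/-
If `g u = g v` with `u ≠ v`, join `u` and `v` to the basepoint and use surjectivity on `π₁` to
lift the loop `g σ · (g τ)⁻¹` (where `σ`, `τ` go from the basepoint to `u`, `v`); this produces a
walk `δ` from `u` to `v` whose image is null-homotopic. Reducing `δ` keeps it nonempty, and an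
immersion maps it to a nonempty reduced walk, which cannot be null-homotopic: homotopy classes
of walks are detected by their words in the free group on darts, and reduced walks give reduced
words.
-/

namespace EWalk

variable {G : SerreGraph}

def append : ∀ {u v w : G.V}, EWalk G u v → EWalk G v w → EWalk G u w
  | _, _, _, nil _, q => q
  | _, _, _, cons e hs ht p, q => cons e hs ht (p.append q)

def reverse : ∀ {u v : G.V}, EWalk G u v → EWalk G v u
  | _, _, nil v => nil v
  | _, _, cons e hs ht p =>
      p.reverse.append
        (cons (G.bar e) (by rwa [SerreGraph.tgt] at ht) (by rw [SerreGraph.tgt, G.bar_bar, hs])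
          (nil _))

def copy {u v u' v' : G.V} (p : EWalk G u v) (hu : u = u') (hv : v = v') : EWalk G u' v' :=
  hu ▸ hv ▸ p

def Reduced : ∀ {u v : G.V}, EWalk G u v → Prop
  | _, _, nil _ => True
  | _, _, cons _ _ _ (nil _) => True
  | _, _, cons e _ _ (cons f hs ht p) => f ≠ G.bar e ∧ Reduced (cons f hs ht p)

theorem reduced_cons_cons {u v w x : G.V} {e f : G.E} {hs : G.src e = u} {ht : G.tgt e = v}
    {hs' : G.src f = v} {ht' : G.tgt f = w} {p : EWalk G w x} :
    (cons e hs ht (cons f hs' ht' p)).Reduced ↔ f ≠ G.bar e ∧ (cons f hs' ht' p).Reduced :=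
  Iff.rfl

theorem Reduced.of_cons {u v w : G.V} {e : G.E} {hs : G.src e = u} {ht : G.tgt e = v}
    {p : EWalk G v w} (h : (cons e hs ht p).Reduced) : p.Reduced := by
  cases p with
  | nil => trivial
  | cons => exact (reduced_cons_cons.1 h).2

/-- A dart `e` is spelled `e ē⁻¹`, so that a backtrack `e ē` cancels while consecutive darts
`e f` of a reduced walk leave the reduced word `e ē⁻¹ f f̄⁻¹`. -/
def letters : ∀ {u v : G.V}, EWalk G u v → List (G.E × Bool)
  | _, _, nil _ => []
  | _, _, cons e _ _ p => (e, true) :: (G.bar e, false) :: p.letters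

def word {u v : G.V} (p : EWalk G u v) : FreeGroup G.E := FreeGroup.mk p.letters

@[simp]
theorem word_nil (v : G.V) : (nil v : EWalk G v v).word = 1 :=
  FreeGroup.one_eq_mk.symm

@[simp]
theorem word_cons {u v w : G.V} (e : G.E) (hs : G.src e = u) (ht : G.tgt e = v)
    (p : EWalk G v w) :
    (cons e hs ht p).word = FreeGroup.of e * (FreeGroup.of (G.bar e))⁻¹ * p.word := by
  rw [word, word, FreeGroup.of, FreeGroup.of, FreeGroup.inv_mk, FreeGroup.mul_mk,
    FreeGroup.mul_mk]
  rfl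

@[simp]
theorem word_append {u v w : G.V} (p : EWalk G u v) (q : EWalk G v w) :
    (p.append q).word = p.word * q.word := by
  induction p with
  | nil => simp [append]
  | cons e hs ht p ih => simp [append, ih, mul_assoc]

@[simp]
theorem word_reverse {u v : G.V} (p : EWalk G u v) : p.reverse.word = p.word⁻¹ := by
  induction p with
  | nil => simp [reverse]
  | cons e hs ht p ih =>
      rw [reverse, word_append, ih, word_cons, word_cons, word_nil, G.bar_bar]
      group

@[simp]
theorem word_copy {u v u' v' : G.V} (p : EWalk G u v) (hu : u = u') (hv : v = v') :
    (p.copy hu hv).word = p.word := by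
  subst hu hv; rfl

theorem word_mapWalk {H : SerreGraph} (f : GraphHom G H) {u v : G.V} (p : EWalk G u v) :
    (f.mapWalk p).word = FreeGroup.map f.onE p.word := by
  induction p with
  | nil => simp [GraphHom.mapWalk]
  | cons e hs ht p ih => simp [GraphHom.mapWalk, ih, f.map_bar]

theorem exists_htp_reduced {u v : G.V} (p : EWalk G u v) :
    ∃ q : EWalk G u v, Htp G p q ∧ q.Reduced := by
  induction p with
  | nil w => exact ⟨nil w, Htp.refl _, trivial⟩
  | cons e hs ht p ih =>
      obtain ⟨q, hpq, hq⟩ := ih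
      have hcons := Htp.cons e hs ht hpq
      cases q with
      | nil => exact ⟨_, hcons, trivial⟩
      | cons f hf htf q =>
          by_cases hfe : f = G.bar e
          · subst hfe
            have hend : _ = _ := htf
            rw [SerreGraph.tgt, G.bar_bar, hs] at hend
            subst hend
            exact ⟨q, hcons.trans (Htp.cancel e hs ht hf htf q), hq.of_cons⟩
          · exact ⟨_, hcons, reduced_cons_cons.2 ⟨hfe, hq⟩⟩

theorem isReduced_letters : ∀ {u v : G.V} {p : EWalk G u v}, p.Reduced →
    FreeGroup.IsReduced p.letters
  | _, _, nil _, _ => .nil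
  | _, _, cons e _ _ (nil _), _ => by
      simp [letters, (G.bar_ne e).symm]
  | _, _, cons e _ _ (cons f _ _ p), h => by
      obtain ⟨hfe, hp⟩ := reduced_cons_cons.1 h
      have := isReduced_letters hp
      simp only [letters] at this ⊢
      simp [FreeGroup.isReduced_cons_cons, (G.bar_ne e).symm, Ne.symm hfe, this]

theorem Reduced.word_cons_ne_one {u v w : G.V} {e : G.E} {hs : G.src e = u}
    {ht : G.tgt e = v} {p : EWalk G v w} (hp : (cons e hs ht p).Reduced) :
    (cons e hs ht p).word ≠ 1 := by
  rw [word, FreeGroup.one_eq_mk, ne_eq, FreeGroup.Red.exact]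
  rintro ⟨l, hl, hnil⟩
  rw [(isReduced_letters hp).red_iff_eq] at hl
  rw [FreeGroup.Red.nil_iff, hl] at hnil
  exact List.cons_ne_nil _ _ hnil

end EWalk

theorem Htp.word_eq {G : SerreGraph} {u v : G.V} {p q : EWalk G u v} (h : Htp G p q) :
    p.word = q.word := by
  induction h with
  | refl => rfl
  | symm _ ih => exact ih.symm
  | trans _ _ ih₁ ih₂ => exact ih₁.trans ih₂
  | cons e hs ht _ ih => simp [ih]
  | cancel e hs ht hs' ht' p =>
      simp only [EWalk.word_cons, G.bar_bar]
      group

namespace IsImmersion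

variable {G H : SerreGraph} {f : GraphHom G H}

theorem reduced_mapWalk (hf : IsImmersion f) : ∀ {u v : G.V} {p : EWalk G u v},
    p.Reduced → (f.mapWalk p).Reduced
  | _, _, .nil _, _ => trivial
  | _, _, .cons _ _ _ (.nil _), _ => trivial
  | _, _, .cons e _ ht (.cons e' hs' _ p), h => by
      obtain ⟨hne, hp⟩ := EWalk.reduced_cons_cons.1 h
      refine EWalk.reduced_cons_cons.2
        ⟨fun himage => hne (hf _ _ ?_ ?_), hf.reduced_mapWalk hp⟩
      · rw [hs']; exact ht.symm
      · rw [himage, f.map_bar]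

theorem injective_onE (hf : IsImmersion f) (hV : Function.Injective f.onV) :
    Function.Injective f.onE := fun a b hab =>
  hf a b (hV (by rw [f.map_src, f.map_src, hab])) hab

theorem injective_onV (hf : IsImmersion f) (hconn : G.Conn) {v₀ : G.V}
    (hsurj : ∀ q : EWalk H (f.onV v₀) (f.onV v₀), ∃ p : EWalk G v₀ v₀, Htp H (f.mapWalk p) q) :
    Function.Injective f.onV := by
  intro u v huv
  obtain ⟨σ⟩ := hconn v₀ u
  obtain ⟨τ⟩ := hconn v₀ v
  obtain ⟨γ, hγ⟩ := hsurj ((f.mapWalk σ).append ((f.mapWalk τ).reverse.copy huv.symm rfl))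
  obtain ⟨δ, hδ, hδred⟩ := EWalk.exists_htp_reduced ((σ.reverse.append γ).append τ)
  have hword : (f.mapWalk δ).word = 1 := by
    rw [EWalk.word_mapWalk, ← hδ.word_eq, EWalk.word_append, EWalk.word_append,
      EWalk.word_reverse, map_mul, map_mul, map_inv, ← EWalk.word_mapWalk,
      ← EWalk.word_mapWalk, ← EWalk.word_mapWalk, hγ.word_eq, EWalk.word_append,
      EWalk.word_copy, EWalk.word_reverse]
    group
  cases δ with
  | nil => rfl
  | cons e hs ht p => exact absurd hword (hf.reduced_mapWalk hδred).word_cons_ne_one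

end IsImmersion

theorem pi1_injective_immersion_is_injective_on_vertices
    {G : SerreGraph} (hconn : G.Conn)
    (g : GraphHom G G) (himm : IsImmersion g)
    (v₀ : G.V) (hiso : InducesPi1Bij g v₀) :
    Function.Injective g.onV ∧
      (Function.Surjective g.onV → Function.Surjective g.onE → IsGraphIso g) := by
  have hV := himm.injective_onV hconn hiso.1
  exact ⟨hV, fun hsV hsE => ⟨⟨hV, hsV⟩, himm.injective_onE hV, hsE⟩⟩
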